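/- arXiv:1805.05155 — 7 statements merged into one kernel-verified Lean document; each statement's English description precedes it below -/
import Mathlib

section
/- Let δ₀ > 0, δ > 0, α > 0, β ∈ (0,1], β' > 0, C > 0, C₀ > 0 be constants with α > 2β'/β − 1, and for each ε ∈ (0, δ₀) let Θ_ε : [0,π] → [0,π] be a continuous strictly increasing bijection satisfying: (1) Θ_ε(0)=0 and Θ_ε(π)=π; (2) Θ_ε(π−θ) = π − Θ_ε(θ) for all θ ∈ [0,π]; (3) Θ_ε(θ₁) + Θ_ε(θ₂) ≤ Θ_ε(θ₁+θ₂) for all θ₁, θ₂ ∈ [0,π] with θ₁+θ₂ ∈ [0,π]; (4) for every continuous convex function J : [0,π] → ℝ with sup_{[0,π]} |J| ≤ ε^{−α} one has ∫₀^π J(Θ_ε(θ))·sin θ dθ ≤ ∫₀^π J(θ)·sin θ dθ + C₀·ε; (5) |Θ_ε(θ₁) − Θ_ε(θ₂)| ≤ C·(ε^δ + ε^{−β'}·|θ₁−θ₂|^β) for all θ₁, θ₂ ∈ [0,π]. Set γ̂ := (1 + α − 2β'/β)/(1 + 2/β). Then for every γ with 0 < γ < γ̂ and γ < δ there exists a constant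 C' > 0 such that for all ε ∈ (0, δ₀) and all θ ∈ [0,π], |Θ_ε(θ) − θ| ≤ C'·ε^γ. -/
/-!
Let `d` be the maximum of the displacement `u = Θ_ε - id`, attained at `θ₀`. Symmetry gives
`|u| ≤ d`, and superadditivity forces `θ₀ > π / 2` and `u ≥ 0` on `[θ₀, π]`.
Unless `d ≲ ε^δ`, Hölder continuity keeps `u ≥ d / 2` on `[θ₀, θ₀ + r]` with
`r = min (d / 6) ((d ε^β' / 6C)^(1/β))`, and `sin ≥ d / 2` there. Testing the convexity
hypothesis against the ramp `ε^(-α) / π · (x - θ₀)₊` then yields `r d² ≲ ε^(1+α)`,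
which solves to `d ≲ ε^γ`.
-/

open Real Set

lemma le_mul_rpow_of_rpow_le {x c ε p q γ : ℝ} (hx : 0 ≤ x) (hc : 0 ≤ c) (hp : 0 < p)
    (hε : 0 < ε) (hε1 : ε ≤ 1) (hγ : γ * p ≤ q) (h : x ^ p ≤ c * ε ^ q) :
    x ≤ c ^ p⁻¹ * ε ^ γ := by
  rw [← rpow_le_rpow_iff hx (by positivity) hp, mul_rpow (by positivity) (by positivity),
    rpow_inv_rpow hc hp.ne', ← rpow_mul hε.le]
  exact h.trans (mul_le_mul_of_nonneg_left (rpow_le_rpow_of_exponent_ge hε hε1 hγ) hc)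

lemma exponent_bounds_of_lt_hat {α β β' γ : ℝ} (hβ : β ∈ Ioc 0 1) (hβ' : 0 ≤ β')
    (hγ : 0 < γ) (hγhat : γ < (1 + α - 2 * β' / β) / (1 + 2 / β)) :
    γ * 3 ≤ 1 + α ∧ γ * (1 + 2 * β) ≤ (1 + α) * β - β' := by
  obtain ⟨hβ0, hβ1⟩ := hβ
  have hγhat' : γ * (β + 2) < β * (1 + α) - 2 * β' := by
    have hden : (1 + 2 / β) * β = β + 2 := by field_simp
    have hnum : (1 + α - 2 * β' / β) * β = β * (1 + α) - 2 * β' := by field_simp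
    rw [lt_div_iff₀ (by positivity), ← mul_lt_mul_iff_of_pos_right hβ0, mul_assoc, hden,
      hnum] at hγhat
    exact hγhat
  constructor <;> nlinarith

lemma half_le_sin_of_le_pi_sub {d t : ℝ} (hd : 0 ≤ d) (ht : π / 2 ≤ t)
    (htd : 5 * d / 6 ≤ π - t) : d / 2 ≤ sin t := by
  have h := mul_le_sin (x := π - t) (by linarith) (by linarith)
  rw [sin_pi_sub] at h
  have : d / 2 ≤ 2 / π * (5 * d / 6) := by
    rw [div_mul_eq_mul_div, le_div_iff₀ pi_pos]
    nlinarith [pi_lt_d2]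
  exact this.trans (h.trans' (mul_le_mul_of_nonneg_left htd (by positivity)))

lemma mul_le_integral_of_le_on {φ : ℝ → ℝ} {a b c r m : ℝ} (hφ : ContinuousOn φ (Icc a b))
    (hφ0 : ∀ t ∈ Icc a b, 0 ≤ φ t) (hac : a ≤ c) (hr : 0 ≤ r) (hcb : c + r ≤ b)
    (hm : ∀ t ∈ Icc c (c + r), m ≤ φ t) : r * m ≤ ∫ t in a..b, φ t := by
  have hab : a ≤ b := by linarith
  calc r * m = ∫ _ in c..c + r, m := by simp
    _ ≤ ∫ t in c..c + r, φ t :=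
      intervalIntegral.integral_mono_on (by linarith) intervalIntegrable_const
        ((hφ.mono (Icc_subset_Icc hac hcb)).intervalIntegrable_of_Icc (by linarith)) hm
    _ ≤ ∫ t in a..b, φ t := by
      refine intervalIntegral.integral_mono_interval hac (by linarith) hcb ?_
        (hφ.intervalIntegrable_of_Icc hab)
      exact (MeasureTheory.ae_restrict_iff' measurableSet_Ioc).2
        (Filter.Eventually.of_forall fun t ht => hφ0 t (Ioc_subset_Icc_self ht))

section Displacement

variable {f : ℝ → ℝ} {a θ₀ : ℝ}

lemma abs_sub_le_of_isMaxOn_of_symm (hsym : ∀ θ ∈ Icc 0 a, f (a - θ) = a - f θ)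
    (hmax : IsMaxOn (fun t => f t - t) (Icc 0 a) θ₀) {t : ℝ} (ht : t ∈ Icc 0 a) :
    |f t - t| ≤ f θ₀ - θ₀ := by
  have h₁ : f t - t ≤ f θ₀ - θ₀ := hmax ht
  have h₂ : f (a - t) - (a - t) ≤ f θ₀ - θ₀ := hmax ⟨by linarith [ht.2], by linarith [ht.1]⟩
  rw [hsym t ht] at h₂
  exact abs_le.2 ⟨by linarith, h₁⟩

lemma half_lt_of_isMaxOn_of_superadditive
    (hsuper : ∀ x ∈ Icc 0 a, ∀ y ∈ Icc 0 a, x + y ∈ Icc 0 a → f x + f y ≤ f (x + y))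
    (hθ₀ : θ₀ ∈ Icc 0 a) (hmax : IsMaxOn (fun t => f t - t) (Icc 0 a) θ₀) (hpos : θ₀ < f θ₀) :
    a / 2 < θ₀ := by
  by_contra! h
  have h2θ₀ : θ₀ + θ₀ ∈ Icc 0 a := ⟨by linarith [hθ₀.1], by linarith⟩
  have := hsuper θ₀ hθ₀ θ₀ hθ₀ h2θ₀
  have : f (θ₀ + θ₀) - (θ₀ + θ₀) ≤ f θ₀ - θ₀ := hmax h2θ₀
  linarith

lemma le_apply_of_isMaxOn_of_superadditive (hsym : ∀ θ ∈ Icc 0 a, f (a - θ) = a - f θ)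
    (hsuper : ∀ x ∈ Icc 0 a, ∀ y ∈ Icc 0 a, x + y ∈ Icc 0 a → f x + f y ≤ f (x + y))
    (hθ₀ : θ₀ ∈ Icc 0 a) (hmax : IsMaxOn (fun t => f t - t) (Icc 0 a) θ₀) {t : ℝ}
    (ht : t ∈ Icc θ₀ a) : t ≤ f t := by
  have hat : a - t ∈ Icc 0 a := ⟨by linarith [ht.2], by linarith [hθ₀.1, ht.1]⟩
  have hsum : θ₀ + (a - t) ∈ Icc 0 a := ⟨by linarith [hθ₀.1, ht.2], by linarith [ht.1]⟩
  have := hsuper θ₀ hθ₀ (a - t) hat hsum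
  have : f (θ₀ + (a - t)) - (θ₀ + (a - t)) ≤ f θ₀ - θ₀ := hmax hsum
  have := hsym t ⟨hθ₀.1.trans ht.1, ht.2⟩
  linarith

end Displacement

lemma mul_le_of_ramp_test {f : ℝ → ℝ} {K E θ₀ r m : ℝ} (hK : 0 < K)
    (hf : ContinuousOn f (Icc 0 π))
    (hconv : ∀ J : ℝ → ℝ, ContinuousOn J (Icc 0 π) → ConvexOn ℝ (Icc 0 π) J →
      (∀ x ∈ Icc 0 π, |J x| ≤ K) →
      ∫ θ in (0 : ℝ)..π, J (f θ) * sin θ ≤ (∫ θ in (0 : ℝ)..π, J θ * sin θ) + E)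
    (hθ₀ : θ₀ ∈ Icc 0 π) (hr : 0 ≤ r) (hrπ : θ₀ + r ≤ π) (hle : ∀ t ∈ Icc θ₀ π, t ≤ f t)
    (hm : ∀ t ∈ Icc θ₀ (θ₀ + r), m ≤ (f t - t) * sin t) :
    r * m ≤ π * E / K := by
  set ramp : ℝ → ℝ := fun x => max (x - θ₀) 0
  have hramp : Continuous ramp := by fun_prop
  have hramp_conv : ConvexOn ℝ (Icc 0 π) ramp :=
    ((convexOn_id (convex_Icc 0 π)).sub (concaveOn_const θ₀ (convex_Icc 0 π))).sup
      (convexOn_const 0 (convex_Icc 0 π))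
  have hKπ : 0 < K / π := by positivity
  have htest := hconv (fun x => K / π * ramp x) (by fun_prop) (hramp_conv.smul hKπ.le)
    fun x hx => by
      rw [abs_of_nonneg (by positivity), ← le_div_iff₀' hKπ, div_div_cancel₀ hK.ne']
      exact max_le (by linarith [hx.2, hθ₀.1]) pi_pos.le
  simp only [mul_assoc, intervalIntegral.integral_const_mul] at htest
  have hint : ∀ g : ℝ → ℝ, ContinuousOn g (Icc 0 π) →
      IntervalIntegrable (fun t => ramp (g t) * sin t) MeasureTheory.volume 0 π :=
    fun g hg => ((hramp.comp_continuousOn hg).mul continuous_sin.continuousOn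
      ).intervalIntegrable_of_Icc pi_pos.le
  have hmono : ∀ t ∈ Icc 0 π, ramp t ≤ ramp (f t) := by
    intro t ht
    rcases le_total t θ₀ with h | h
    · exact (max_eq_right (by linarith)).trans_le (le_max_right _ _)
    · exact max_le_max (by linarith [hle t ⟨h, ht.2⟩]) le_rfl
  have hlower : r * m ≤ ∫ t in (0 : ℝ)..π, (ramp (f t) - ramp t) * sin t := by
    refine mul_le_integral_of_le_on (by fun_prop) (fun t ht => ?_) hθ₀.1 hr hrπ fun t ht => ?_
    · exact mul_nonneg (by linarith [hmono t ht]) (sin_nonneg_of_nonneg_of_le_pi ht.1 ht.2)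
    · have hft := hle t ⟨ht.1, by linarith [ht.2]⟩
      simpa only [ramp, max_eq_left (by linarith [ht.1] : 0 ≤ f t - θ₀),
        max_eq_left (by linarith [ht.1] : 0 ≤ t - θ₀), sub_sub_sub_cancel_right] using hm t ht
  simp only [sub_mul] at hlower
  have hdefect : K / π * (r * m) ≤ E := by
    rw [intervalIntegral.integral_sub (hint f hf) (hint (fun t => t) continuousOn_id)] at hlower
    nlinarith
  rw [le_div_iff₀ hK]
  calc r * m * K = π * (K / π * (r * m)) := by field_simp
    _ ≤ π * E := mul_le_mul_of_nonneg_left hdefect pi_pos.le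

lemma rpow_three_le_or_rpow_le {d L β P : ℝ} (hd : 0 < d) (hL : 0 < L) (hβ : 0 < β)
    (h : ∀ r, 0 < r → r ≤ d / 6 → L * r ^ β ≤ d / 6 → r * (d / 2 * (d / 2)) ≤ P) :
    d ^ (3 : ℝ) ≤ 24 * P ∨ d ^ (1 + 2 * β) ≤ 6 * L * (4 * P) ^ β := by
  set b := (d / (6 * L)) ^ β⁻¹
  have hb : 0 < b := by positivity
  have hbβ : b ^ β = d / (6 * L) := rpow_inv_rpow (by positivity) hβ.ne'
  have hLb : L * b ^ β = d / 6 := by rw [hbβ]; field_simp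
  rcases le_total (d / 6) b with hdb | hbd
  · left
    have := h (d / 6) (by positivity) le_rfl <|
      (mul_le_mul_of_nonneg_left (rpow_le_rpow (by positivity) hdb hβ.le) hL.le).trans hLb.le
    rw [show (3 : ℝ) = (3 : ℕ) by norm_num, rpow_natCast]
    linarith
  · right
    have hP := h b hb hbd hLb.le
    have hP0 : 0 < P := hP.trans_lt' (by positivity)
    have hb4 : b ≤ 4 * P / d ^ (2 : ℝ) := by
      rw [le_div_iff₀ (by positivity), rpow_two]
      linarith
    have := rpow_le_rpow hb.le hb4 hβ.le
    rw [hbβ, div_rpow (by positivity) (by positivity), ← rpow_mul hd.le,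
      div_le_div_iff₀ (by positivity) (by positivity)] at this
    rw [rpow_add hd, rpow_one]
    linarith

theorem exists_displacement_bound {f : ℝ → ℝ} {A L β K E : ℝ} (hL : 0 < L) (hβ : 0 < β)
    (hK : 0 < K) (hf : ContinuousOn f (Icc 0 π)) (hmaps : MapsTo f (Icc 0 π) (Icc 0 π))
    (h0 : f 0 = 0) (hsym : ∀ θ ∈ Icc 0 π, f (π - θ) = π - f θ)
    (hsuper : ∀ x ∈ Icc 0 π, ∀ y ∈ Icc 0 π, x + y ∈ Icc 0 π → f x + f y ≤ f (x + y))
    (hconv : ∀ J : ℝ → ℝ, ContinuousOn J (Icc 0 π) → ConvexOn ℝ (Icc 0 π) J →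
      (∀ x ∈ Icc 0 π, |J x| ≤ K) →
      ∫ θ in (0 : ℝ)..π, J (f θ) * sin θ ≤ (∫ θ in (0 : ℝ)..π, J θ * sin θ) + E)
    (hholder : ∀ x ∈ Icc 0 π, ∀ y ∈ Icc 0 π, |f x - f y| ≤ A + L * |x - y| ^ β) :
    ∃ d, 0 ≤ d ∧ (∀ t ∈ Icc 0 π, |f t - t| ≤ d) ∧
      (d ≤ 6 * A ∨ d ^ (3 : ℝ) ≤ 24 * (π * E / K) ∨
        d ^ (1 + 2 * β) ≤ 6 * L * (4 * (π * E / K)) ^ β) := by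
  obtain ⟨θ₀, hθ₀, hmax⟩ := isCompact_Icc.exists_isMaxOn (nonempty_Icc.2 pi_pos.le)
    (hf.sub continuousOn_id : ContinuousOn (fun t => f t - t) _)
  set d := f θ₀ - θ₀
  have hd0 : 0 ≤ d := sub_nonneg.2 (by simpa [h0] using hmax ⟨le_rfl, pi_pos.le⟩)
  have hA : 0 ≤ A := by
    simpa [zero_rpow hβ.ne'] using hholder 0 ⟨le_rfl, pi_pos.le⟩ 0 ⟨le_rfl, pi_pos.le⟩
  refine ⟨d, hd0, fun t ht => abs_sub_le_of_isMaxOn_of_symm hsym hmax ht, ?_⟩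
  rcases le_or_gt d (6 * A) with hdA | hdA
  · exact Or.inl hdA
  have hd : 0 < d := by linarith
  have hθ₀π : π / 2 < θ₀ := half_lt_of_isMaxOn_of_superadditive hsuper hθ₀ hmax (by linarith)
  have hdπ : d ≤ π - θ₀ := by linarith [(hmaps hθ₀).2]
  refine Or.inr (rpow_three_le_or_rpow_le hd hL hβ fun r hr hrd hLr => ?_)
  refine mul_le_of_ramp_test hK hf hconv hθ₀ hr.le (by linarith)
    (fun t ht => le_apply_of_isMaxOn_of_superadditive hsym hsuper hθ₀ hmax ht) fun t ht => ?_
  have htπ : t ∈ Icc 0 π := ⟨hθ₀.1.trans ht.1, by linarith [ht.2]⟩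
  have hft : d / 2 ≤ f t - t := by
    have hdist : |t - θ₀| ^ β ≤ r ^ β :=
      rpow_le_rpow (abs_nonneg _) (abs_le.2 ⟨by linarith [ht.1], by linarith [ht.2]⟩) hβ.le
    have := (abs_le.1 (hholder t htπ θ₀ hθ₀)).1
    nlinarith [mul_le_mul_of_nonneg_left hdist hL.le, ht.2]
  have hsin : d / 2 ≤ sin t :=
    half_le_sin_of_le_pi_sub hd0 (by linarith [ht.1]) (by linarith [ht.2])
  exact mul_le_mul hft hsin (by positivity) (by linarith)

theorem abs_sub_le_mul_rpow_of_lt_one {f : ℝ → ℝ} {ε δ α β β' γ C C₀ : ℝ} (hε : 0 < ε)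
    (hε1 : ε < 1) (hβ : 0 < β) (hC : 0 < C) (hC₀ : 0 < C₀) (hγδ : γ ≤ δ) (h3γ : γ * 3 ≤ 1 + α)
    (hβγ : γ * (1 + 2 * β) ≤ (1 + α) * β - β') (hf : ContinuousOn f (Icc 0 π))
    (hmaps : MapsTo f (Icc 0 π) (Icc 0 π)) (h0 : f 0 = 0)
    (hsym : ∀ θ ∈ Icc 0 π, f (π - θ) = π - f θ)
    (hsuper : ∀ x ∈ Icc 0 π, ∀ y ∈ Icc 0 π, x + y ∈ Icc 0 π → f x + f y ≤ f (x + y))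
    (hconv : ∀ J : ℝ → ℝ, ContinuousOn J (Icc 0 π) → ConvexOn ℝ (Icc 0 π) J →
      (∀ x ∈ Icc 0 π, |J x| ≤ ε ^ (-α)) →
      ∫ θ in (0 : ℝ)..π, J (f θ) * sin θ ≤ (∫ θ in (0 : ℝ)..π, J θ * sin θ) + C₀ * ε)
    (hholder : ∀ x ∈ Icc 0 π, ∀ y ∈ Icc 0 π,
      |f x - f y| ≤ C * (ε ^ δ + ε ^ (-β') * |x - y| ^ β))
    {θ : ℝ} (hθ : θ ∈ Icc 0 π) :
    |f θ - θ| ≤ (6 * C + (24 * π * C₀) ^ (3 : ℝ)⁻¹ +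
      (6 * C * (4 * π * C₀) ^ β) ^ (1 + 2 * β)⁻¹) * ε ^ γ := by
  have hE : π * (C₀ * ε) / ε ^ (-α) = π * C₀ * ε ^ (1 + α) := by
    rw [rpow_neg hε.le, rpow_add hε, rpow_one]; field_simp
  have hL : 6 * (C * ε ^ (-β')) * (4 * (π * C₀ * ε ^ (1 + α))) ^ β
      = 6 * C * (4 * π * C₀) ^ β * ε ^ ((1 + α) * β - β') := by
    rw [show 4 * (π * C₀ * ε ^ (1 + α)) = 4 * π * C₀ * ε ^ (1 + α) by ring,
      mul_rpow (by positivity) (by positivity), ← rpow_mul hε.le, sub_eq_neg_add, rpow_add hε]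
    ring
  obtain ⟨d, hd0, hθd, hd⟩ := exists_displacement_bound (A := C * ε ^ δ)
    (L := C * ε ^ (-β')) (by positivity) hβ (by positivity) hf hmaps h0 hsym hsuper hconv
    fun x hx y hy => (hholder x hx y hy).trans_eq (by ring)
  rw [hE, hL] at hd
  refine (hθd θ hθ).trans ?_
  rw [add_mul, add_mul]
  have hc₁ : 0 ≤ 6 * C * ε ^ γ := by positivity
  have hc₂ : 0 ≤ (24 * π * C₀) ^ (3 : ℝ)⁻¹ * ε ^ γ := by positivity
  have hc₃ : 0 ≤ (6 * C * (4 * π * C₀) ^ β) ^ (1 + 2 * β)⁻¹ * ε ^ γ := by positivity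
  rcases hd with hd | hd | hd
  · have := hd.trans <| mul_le_mul_of_nonneg_left
      (mul_le_mul_of_nonneg_left (rpow_le_rpow_of_exponent_ge hε hε1.le hγδ) hC.le) (by norm_num)
    linarith
  · have := le_mul_rpow_of_rpow_le (c := 24 * π * C₀) (q := 1 + α) hd0 (by positivity)
      three_pos hε hε1.le h3γ (hd.trans_eq (by ring))
    linarith
  · have := le_mul_rpow_of_rpow_le hd0 (by positivity) (by positivity) hε hε1.le hβγ hd
    linarith

theorem otal_lemma_quantitative_general
    (δ₀ δ α β β' C C₀ : ℝ)
    (hβ : β ∈ Set.Ioc (0 : ℝ) 1)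
    (hβ' : 0 < β') (hC : 0 < C) (hC₀ : 0 < C₀)
    (Θ : ℝ → ℝ → ℝ)
    (hcont : ∀ ε ∈ Set.Ioo 0 δ₀, ContinuousOn (Θ ε) (Set.Icc 0 π))
    (hbij : ∀ ε ∈ Set.Ioo 0 δ₀, Set.BijOn (Θ ε) (Set.Icc 0 π) (Set.Icc 0 π))
    (h0 : ∀ ε ∈ Set.Ioo 0 δ₀, Θ ε 0 = 0)
    (hsym : ∀ ε ∈ Set.Ioo 0 δ₀, ∀ θ ∈ Set.Icc 0 π, Θ ε (π - θ) = π - Θ ε θ)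
    (hsuper : ∀ ε ∈ Set.Ioo 0 δ₀, ∀ θ₁ ∈ Set.Icc 0 π, ∀ θ₂ ∈ Set.Icc 0 π,
      θ₁ + θ₂ ∈ Set.Icc 0 π → Θ ε θ₁ + Θ ε θ₂ ≤ Θ ε (θ₁ + θ₂))
    (hconv : ∀ ε ∈ Set.Ioo 0 δ₀, ∀ J : ℝ → ℝ, ContinuousOn J (Set.Icc 0 π) →
      ConvexOn ℝ (Set.Icc 0 π) J → (∀ x ∈ Set.Icc 0 π, |J x| ≤ ε ^ (-α)) →
      ∫ θ in (0 : ℝ)..π, J (Θ ε θ) * Real.sin θ ≤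
        (∫ θ in (0 : ℝ)..π, J θ * Real.sin θ) + C₀ * ε)
    (hholder : ∀ ε ∈ Set.Ioo 0 δ₀, ∀ θ₁ ∈ Set.Icc 0 π, ∀ θ₂ ∈ Set.Icc 0 π,
      |Θ ε θ₁ - Θ ε θ₂| ≤ C * (ε ^ δ + ε ^ (-β') * |θ₁ - θ₂| ^ β)) :
    ∀ γ : ℝ, 0 < γ → γ < (1 + α - 2 * β' / β) / (1 + 2 / β) → γ < δ →
      ∃ C' > 0, ∀ ε ∈ Set.Ioo 0 δ₀, ∀ θ ∈ Set.Icc 0 π,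
        |Θ ε θ - θ| ≤ C' * ε ^ γ := by
  intro γ hγ hγhat hγδ
  obtain ⟨h3γ, hβγ⟩ := exponent_bounds_of_lt_hat hβ hβ'.le hγ hγhat
  obtain ⟨K, hK, hbound⟩ : ∃ K ≥ 0, ∀ ε ∈ Ioo 0 δ₀, ε < 1 → ∀ θ ∈ Icc 0 π,
      |Θ ε θ - θ| ≤ K * ε ^ γ :=
    ⟨_, by positivity, fun ε hε hε1 θ hθ => abs_sub_le_mul_rpow_of_lt_one hε.1 hε1 hβ.1 hC hC₀
      hγδ.le h3γ hβγ (hcont ε hε) (hbij ε hε).mapsTo (h0 ε hε) (hsym ε hε) (hsuper ε hε)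
      (hconv ε hε) (hholder ε hε) hθ⟩
  refine ⟨π + K, by positivity, fun ε hε θ hθ => ?_⟩
  have hεγ : 0 < ε ^ γ := rpow_pos_of_pos hε.1 γ
  rcases le_or_gt 1 ε with hε1 | hε1
  · have hθ' := (hbij ε hε).mapsTo hθ
    have : |Θ ε θ - θ| ≤ π :=
      abs_sub_le_iff.2 ⟨by linarith [hθ'.2, hθ.1], by linarith [hθ'.1, hθ.2]⟩
    nlinarith [one_le_rpow hε1 hγ.le, pi_pos]
  · nlinarith [hbound ε hε hε1 θ hθ, pi_pos]

/-- Quantitative version of Otal's lemma for families of increasing homeomorphisms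
of `[0, π]`. -/
theorem otal_lemma_quantitative
    (δ₀ δ α β β' C C₀ : ℝ)
    (hδ₀ : 0 < δ₀) (hδ : 0 < δ) (hα : 0 < α) (hβ : β ∈ Set.Ioc (0 : ℝ) 1)
    (hβ' : 0 < β') (hC : 0 < C) (hC₀ : 0 < C₀)
    (hαβ : α > 2 * β' / β - 1)
    (Θ : ℝ → ℝ → ℝ)
    (hcont : ∀ ε ∈ Set.Ioo 0 δ₀, ContinuousOn (Θ ε) (Set.Icc 0 π))
    (hmono : ∀ ε ∈ Set.Ioo 0 δ₀, StrictMonoOn (Θ ε) (Set.Icc 0 π))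
    (hbij : ∀ ε ∈ Set.Ioo 0 δ₀, Set.BijOn (Θ ε) (Set.Icc 0 π) (Set.Icc 0 π))
    (h0 : ∀ ε ∈ Set.Ioo 0 δ₀, Θ ε 0 = 0)
    (hπ : ∀ ε ∈ Set.Ioo 0 δ₀, Θ ε π = π)
    (hsym : ∀ ε ∈ Set.Ioo 0 δ₀, ∀ θ ∈ Set.Icc 0 π, Θ ε (π - θ) = π - Θ ε θ)
    (hsuper : ∀ ε ∈ Set.Ioo 0 δ₀, ∀ θ₁ ∈ Set.Icc 0 π, ∀ θ₂ ∈ Set.Icc 0 π,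
      θ₁ + θ₂ ∈ Set.Icc 0 π → Θ ε θ₁ + Θ ε θ₂ ≤ Θ ε (θ₁ + θ₂))
    (hconv : ∀ ε ∈ Set.Ioo 0 δ₀, ∀ J : ℝ → ℝ, ContinuousOn J (Set.Icc 0 π) →
      ConvexOn ℝ (Set.Icc 0 π) J → (∀ x ∈ Set.Icc 0 π, |J x| ≤ ε ^ (-α)) →
      ∫ θ in (0 : ℝ)..π, J (Θ ε θ) * Real.sin θ ≤
        (∫ θ in (0 : ℝ)..π, J θ * Real.sin θ) + C₀ * ε)
    (hholder : ∀ ε ∈ Set.Ioo 0 δ₀, ∀ θ₁ ∈ Set.Icc 0 π, ∀ θ₂ ∈ Set.Icc 0 π,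
      |Θ ε θ₁ - Θ ε θ₂| ≤ C * (ε ^ δ + ε ^ (-β') * |θ₁ - θ₂| ^ β)) :
    ∀ γ : ℝ, 0 < γ → γ < (1 + α - 2 * β' / β) / (1 + 2 / β) → γ < δ →
      ∃ C' > 0, ∀ ε ∈ Set.Ioo 0 δ₀, ∀ θ ∈ Set.Icc 0 π,
        |Θ ε θ - θ| ≤ C' * ε ^ γ :=
  otal_lemma_quantitative_general δ₀ δ α β β' C C₀ hβ hβ' hC hC₀ Θ hcont hbij h0 hsym hsuper hconv
    hholder
end

section
/- Let δ₀ > 0, K > 0, C₀ > 0, and for each ε ∈ (0, δ₀) let Θ_ε : [0,π] → [0,π] be a continuous strictly increasing bijection satisfying: (1) Θ_ε(0)=0 and Θ_ε(π)=π; (2) Θ_ε(π−θ) = π − Θ_ε(θ) for all θ ∈ [0,π]; (3) Θ_ε(θ₁) + Θ_ε(θ₂) ≤ Θ_ε(θ₁+θ₂) for all θ₁, θ₂ ∈ [0,π] with θ₁+θ₂ ∈ [0,π]; (4) |Θ_ε(θ₁) − Θ_ε(θ₂)| ≤ K·|θ₁−θ₂| for all θ₁, θ₂ ∈ [0,π];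 (5) for every continuous convex function J : [0,π] → ℝ with sup_{[0,π]} |J| ≤ 1 one has ∫₀^π J(Θ_ε(θ))·sin θ dθ ≤ ∫₀^π J(θ)·sin θ dθ + C₀·ε. Then for every γ with 0 < γ < 1/3 there exists a constant C' > 0 such that for all ε ∈ (0, δ₀) and all θ ∈ [0,π], |Θ_ε(θ) − θ| ≤ C'·ε^γ. -/
open Real Set

/-- Key quantitative estimate for a single homeomorphism. -/
lemma otal_key (K C₀ ε : ℝ) (hK : 1 ≤ K) (hC₀ : 0 < C₀) (hε : 0 < ε)
    (f : ℝ → ℝ)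
    (hcont : ContinuousOn f (Icc 0 π))
    (h0 : f 0 = 0) (hπf : f π = π)
    (hsym : ∀ θ ∈ Icc 0 π, f (π - θ) = π - f θ)
    (hsuper : ∀ θ₁ ∈ Icc 0 π, ∀ θ₂ ∈ Icc 0 π, θ₁ + θ₂ ∈ Icc 0 π →
      f θ₁ + f θ₂ ≤ f (θ₁ + θ₂))
    (hlip : ∀ θ₁ ∈ Icc 0 π, ∀ θ₂ ∈ Icc 0 π, |f θ₁ - f θ₂| ≤ K * |θ₁ - θ₂|)
    (hconv : ∀ J : ℝ → ℝ, ContinuousOn J (Icc 0 π) → ConvexOn ℝ (Icc 0 π) J →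
      (∀ x ∈ Icc 0 π, |J x| ≤ 1) →
      ∫ θ in (0:ℝ)..π, J (f θ) * sin θ ≤ (∫ θ in (0:ℝ)..π, J θ * sin θ) + C₀ * ε) :
    ∀ θ ∈ Icc 0 π, |f θ - θ| ^ 3 ≤ 8 * π ^ 2 * (K + 1) ^ 2 * C₀ * ε := by
  have hπ0 : (0:ℝ) < π := pi_pos
  have hgcont : ContinuousOn (fun θ => f θ - θ) (Icc 0 π) := hcont.sub continuousOn_id
  obtain ⟨θ₀, hθ₀, hmax⟩ := isCompact_Icc.exists_isMaxOn
    (nonempty_Icc.2 hπ0.le) hgcont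
  obtain ⟨d, hd⟩ : ∃ x : ℝ, f θ₀ - θ₀ = x := ⟨_, rfl⟩
  have hmax' : ∀ u ∈ Icc 0 π, f u - u ≤ d := by
    intro u hu; rw [← hd]; exact hmax hu
  have h0mem : (0:ℝ) ∈ Icc 0 π := ⟨le_refl 0, hπ0.le⟩
  have hπmem : π ∈ Icc 0 π := ⟨hπ0.le, le_refl π⟩
  have hd0 : 0 ≤ d := by have := hmax' 0 h0mem; rw [h0] at this; linarith
  have hgmin : ∀ u ∈ Icc 0 π, -d ≤ f u - u := by
    intro u hu
    have hu' : π - u ∈ Icc 0 π := ⟨by linarith [hu.2], by linarith [hu.1]⟩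
    have h1 := hmax' (π - u) hu'
    rw [hsym u hu] at h1
    linarith
  have habs : ∀ θ ∈ Icc 0 π, |f θ - θ| ≤ d := by
    intro θ hθ
    exact abs_le.2 ⟨hgmin θ hθ, hmax' θ hθ⟩
  -- main claim
  have hmain : d ^ 3 ≤ 8 * π ^ 2 * (K + 1) ^ 2 * C₀ * ε := by
    rcases eq_or_lt_of_le hd0 with hdz | hdpos
    · calc d ^ 3 = 0 := by rw [← hdz]; ring
        _ ≤ _ := by positivity
    obtain ⟨K1, hK1⟩ : ∃ x : ℝ, K + 1 = x := ⟨_, rfl⟩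
    have hK1two : (2:ℝ) ≤ K1 := by rw [← hK1]; linarith
    have hK1pos : (0:ℝ) < K1 := by linarith
    obtain ⟨L, hL⟩ : ∃ x : ℝ, d / (2 * K1) = x := ⟨_, rfl⟩
    have hLpos : 0 < L := by rw [← hL]; positivity
    have hLK1 : 2 * K1 * L = d := by rw [← hL]; field_simp
    have hLd : 4 * L ≤ d := by nlinarith
    -- Lipschitz for f - id
    have hglip : ∀ u ∈ Icc 0 π, ∀ v ∈ Icc 0 π, |(f u - u) - (f v - v)| ≤ K1 * |u - v| := by
      intro u hu v hv
      have h1 : |f u - f v| ≤ K * |u - v| := hlip u hu v hv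
      calc |(f u - u) - (f v - v)| = |(f u - f v) - (u - v)| := by ring_nf
        _ ≤ |f u - f v| + |u - v| := abs_sub _ _
        _ ≤ K * |u - v| + |u - v| := by linarith
        _ = (K + 1) * |u - v| := by ring
        _ = K1 * |u - v| := by rw [hK1]
    have hdθ₀ : d ≤ K1 * θ₀ := by
      have h1 := hglip θ₀ hθ₀ 0 h0mem
      rw [h0, sub_zero, sub_zero, sub_zero, abs_of_nonneg hθ₀.1, hd] at h1
      exact (le_abs_self d).trans h1
    have hdπθ₀ : d ≤ K1 * (π - θ₀) := by
      have h1 := hglip θ₀ hθ₀ π hπmem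
      rw [hπf, sub_self, sub_zero, hd] at h1
      have h2 : |θ₀ - π| = π - θ₀ := by
        rw [abs_sub_comm]; exact abs_of_nonneg (by linarith [hθ₀.2])
      rw [h2] at h1
      exact (le_abs_self d).trans h1
    have h2Lθ₀ : 2 * L ≤ θ₀ := by nlinarith
    have h2Lπθ₀ : 2 * L ≤ π - θ₀ := by nlinarith
    obtain ⟨c, hc⟩ : ∃ x : ℝ, θ₀ + L = x := ⟨_, rfl⟩
    have hcmem : c ∈ Icc 0 π := ⟨by rw [← hc]; linarith [hθ₀.1], by rw [← hc]; linarith⟩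
    have hθ₀c : θ₀ ≤ c := by rw [← hc]; linarith
    -- positivity of f - id to the right of θ₀
    have hposR : ∀ θ ∈ Icc θ₀ π, 0 ≤ f θ - θ := by
      intro θ hθ
      have hθmem : θ ∈ Icc 0 π := ⟨le_trans hθ₀.1 hθ.1, hθ.2⟩
      have hsub : θ - θ₀ ∈ Icc 0 π := ⟨by linarith [hθ.1], by linarith [hθ.2, hθ₀.1]⟩
      have hsum : θ₀ + (θ - θ₀) ∈ Icc 0 π := by rw [add_sub_cancel]; exact hθmem
      have h1 := hsuper θ₀ hθ₀ (θ - θ₀) hsub hsum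
      rw [add_sub_cancel] at h1
      have h2 : -d ≤ f (θ - θ₀) - (θ - θ₀) := hgmin _ hsub
      linarith [hd]
    -- lower bound on the interval [θ₀, c]
    have hI : ∀ θ ∈ Icc θ₀ c, d / 2 ≤ f θ - θ := by
      intro θ hθ
      have hθmem : θ ∈ Icc 0 π := ⟨le_trans hθ₀.1 hθ.1, le_trans hθ.2 hcmem.2⟩
      have hsub : θ - θ₀ ∈ Icc 0 π := ⟨by linarith [hθ.1], by linarith [hθmem.2, hθ₀.1]⟩
      have hsum : θ₀ + (θ - θ₀) ∈ Icc 0 π := by rw [add_sub_cancel]; exact hθmem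
      have h1 := hsuper θ₀ hθ₀ (θ - θ₀) hsub hsum
      rw [add_sub_cancel] at h1
      have h2 := hglip (θ - θ₀) hsub 0 h0mem
      rw [h0, sub_zero, sub_zero, sub_zero, abs_of_nonneg hsub.1] at h2
      have h3 : -(K1 * (θ - θ₀)) ≤ f (θ - θ₀) - (θ - θ₀) := by
        have := neg_abs_le (f (θ - θ₀) - (θ - θ₀)); linarith
      have hθc : θ - θ₀ ≤ L := by rw [← hc] at hθ; linarith [hθ.2]
      have h4 : K1 * (θ - θ₀) ≤ K1 * L := mul_le_mul_of_nonneg_left hθc hK1pos.le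
      nlinarith [hd]
    -- the convex test function
    obtain ⟨J, hJdef⟩ : ∃ J : ℝ → ℝ, (fun x : ℝ => π⁻¹ * max (x - c) 0) = J := ⟨_, rfl⟩
    have hJx : ∀ x, J x = π⁻¹ * max (x - c) 0 := fun x => by rw [← hJdef]
    have hJcont : Continuous J := by
      rw [← hJdef]
      exact continuous_const.mul ((continuous_id.sub continuous_const).max continuous_const)
    have hJconv : ConvexOn ℝ (Icc 0 π) J := by
      rw [← hJdef]
      have h1 : ConvexOn ℝ (Icc 0 π) (fun x : ℝ => x - c) :=
        (convexOn_id (convex_Icc _ _)).sub (concaveOn_const _ (convex_Icc _ _))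
      have h2 : ConvexOn ℝ (Icc 0 π) (fun _ : ℝ => (0:ℝ)) := convexOn_const _ (convex_Icc _ _)
      exact (h1.sup h2).smul (c := π⁻¹) (by positivity)
    have hJnonneg : ∀ x, 0 ≤ J x := fun x => by rw [hJx]; positivity
    have hJmono : Monotone J := by
      intro a b hab
      rw [hJx, hJx]
      exact mul_le_mul_of_nonneg_left (max_le_max (by linarith) le_rfl) (by positivity)
    have hJzero : ∀ x, x ≤ c → J x = 0 := by
      intro x hx
      rw [hJx, max_eq_right (by linarith : x - c ≤ 0), mul_zero]
    have hJbdd : ∀ x ∈ Icc 0 π, |J x| ≤ 1 := by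
      intro x hx
      rw [abs_of_nonneg (hJnonneg x), hJx]
      have h1 : max (x - c) 0 ≤ π := max_le (by linarith [hx.2, hcmem.1]) hπ0.le
      calc π⁻¹ * max (x - c) 0 ≤ π⁻¹ * π := mul_le_mul_of_nonneg_left h1 (by positivity)
        _ = 1 := inv_mul_cancel₀ hπ0.ne'
    -- pointwise inequalities
    have hptw : ∀ θ ∈ Icc 0 π, 0 ≤ (J (f θ) - J θ) * sin θ := by
      intro θ hθ
      have hs : 0 ≤ sin θ := sin_nonneg_of_nonneg_of_le_pi hθ.1 hθ.2
      apply mul_nonneg _ hs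
      rcases le_or_gt θ c with h | h
      · rw [hJzero θ h]; simpa using hJnonneg (f θ)
      · have hpr : 0 ≤ f θ - θ := hposR θ ⟨by linarith [hθ₀c], hθ.2⟩
        have := hJmono (by linarith : θ ≤ f θ)
        linarith
    have hptwI : ∀ θ ∈ Icc θ₀ c, d / (4 * π) * (2 * L / π) ≤ (J (f θ) - J θ) * sin θ := by
      intro θ hθ
      have hθmem : θ ∈ Icc 0 π := ⟨le_trans hθ₀.1 hθ.1, le_trans hθ.2 hcmem.2⟩
      have hg2 : d / 2 ≤ f θ - θ := hI θ hθ
      have hfc : d / 4 ≤ f θ - c := by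
        have h1 := hθ.1
        have h2 : c = θ₀ + L := hc.symm
        have h3 : 4 * L ≤ d := hLd
        linarith
      have hJf : d / (4 * π) ≤ J (f θ) := by
        rw [hJx]
        have h1 : d / 4 ≤ max (f θ - c) 0 := le_trans hfc (le_max_left _ _)
        calc d / (4 * π) = π⁻¹ * (d / 4) := by rw [inv_mul_eq_div, div_div]
          _ ≤ π⁻¹ * max (f θ - c) 0 := mul_le_mul_of_nonneg_left h1 (by positivity)
      have hJθ : J θ = 0 := hJzero θ hθ.2
      have hsin : 2 * L / π ≤ sin θ := by
        have hθL : L ≤ θ := by linarith [hθ.1, h2Lθ₀, hLpos]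
        have hθR : L ≤ π - θ := by
          have h1 := hθ.2
          have h2 : c = θ₀ + L := hc.symm
          linarith [h2Lπθ₀]
        rcases le_or_gt θ (π / 2) with h | h
        · have h1 := Real.mul_le_sin (x := θ) hθmem.1 h
          calc 2 * L / π = 2 / π * L := by ring
            _ ≤ 2 / π * θ := mul_le_mul_of_nonneg_left hθL (by positivity)
            _ ≤ sin θ := h1
        · have h2 : π - θ ≤ π / 2 := by linarith
          have h1 := Real.mul_le_sin (x := π - θ) (by linarith [hθmem.2]) h2
          rw [Real.sin_pi_sub] at h1
          calc 2 * L / π = 2 / π * L := by ring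
            _ ≤ 2 / π * (π - θ) := mul_le_mul_of_nonneg_left hθR (by positivity)
            _ ≤ sin θ := h1
      rw [hJθ, sub_zero]
      exact mul_le_mul hJf hsin (by positivity) (hJnonneg _)
    -- integrability
    have hInt : IntervalIntegrable (fun θ => (J (f θ) - J θ) * sin θ)
        MeasureTheory.volume 0 π := by
      apply ContinuousOn.intervalIntegrable
      rw [uIcc_of_le hπ0.le]
      exact ((hJcont.comp_continuousOn hcont).sub hJcont.continuousOn).mul
        continuous_sin.continuousOn
    have hsub : ∀ a b : ℝ, a ∈ Icc 0 π → b ∈ Icc 0 π →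
        IntervalIntegrable (fun θ => (J (f θ) - J θ) * sin θ) MeasureTheory.volume a b := by
      intro a b ha hb
      apply hInt.mono_set
      apply uIcc_subset_uIcc <;> rw [uIcc_of_le hπ0.le] <;> assumption
    -- splitting the integral
    have hsplit : (∫ θ in (0:ℝ)..θ₀, (J (f θ) - J θ) * sin θ)
        + (∫ θ in θ₀..c, (J (f θ) - J θ) * sin θ)
        + (∫ θ in c..π, (J (f θ) - J θ) * sin θ)
        = ∫ θ in (0:ℝ)..π, (J (f θ) - J θ) * sin θ := by
      rw [intervalIntegral.integral_add_adjacent_intervals (hsub 0 θ₀ h0mem hθ₀)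
        (hsub θ₀ c hθ₀ hcmem)]
      exact intervalIntegral.integral_add_adjacent_intervals (hsub 0 c h0mem hcmem)
        (hsub c π hcmem hπmem)
    have hA : 0 ≤ ∫ θ in (0:ℝ)..θ₀, (J (f θ) - J θ) * sin θ :=
      intervalIntegral.integral_nonneg hθ₀.1
        (fun u hu => hptw u ⟨hu.1, le_trans hu.2 hθ₀.2⟩)
    have hC : 0 ≤ ∫ θ in c..π, (J (f θ) - J θ) * sin θ :=
      intervalIntegral.integral_nonneg hcmem.2
        (fun u hu => hptw u ⟨le_trans hcmem.1 hu.1, hu.2⟩)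
    have hB : d / (4 * π) * (2 * L / π) * L ≤ ∫ θ in θ₀..c, (J (f θ) - J θ) * sin θ := by
      have h1 := intervalIntegral.integral_mono_on hθ₀c intervalIntegrable_const
        (hsub θ₀ c hθ₀ hcmem) hptwI
      rw [intervalIntegral.integral_const, smul_eq_mul] at h1
      have h2 : c - θ₀ = L := by rw [← hc]; ring
      rw [h2] at h1
      linarith [h1]
    -- the convexity test
    have hconvJ := hconv J hJcont.continuousOn hJconv hJbdd
    have hintsub : (∫ θ in (0:ℝ)..π, (J (f θ) - J θ) * sin θ)
        = (∫ θ in (0:ℝ)..π, J (f θ) * sin θ) - ∫ θ in (0:ℝ)..π, J θ * sin θ := by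
      rw [← intervalIntegral.integral_sub]
      · congr 1; ext θ; ring
      · apply ContinuousOn.intervalIntegrable
        rw [uIcc_of_le hπ0.le]
        exact (hJcont.comp_continuousOn hcont).mul continuous_sin.continuousOn
      · apply ContinuousOn.intervalIntegrable
        rw [uIcc_of_le hπ0.le]
        exact hJcont.continuousOn.mul continuous_sin.continuousOn
    have hfinal : d / (4 * π) * (2 * L / π) * L ≤ C₀ * ε := by
      have h1 : d / (4 * π) * (2 * L / π) * L
          ≤ ∫ θ in (0:ℝ)..π, (J (f θ) - J θ) * sin θ := by
        rw [← hsplit]; linarith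
      rw [hintsub] at h1
      linarith
    calc d ^ 3 = (2 * K1 * L) ^ 2 * d := by rw [hLK1]; ring
      _ = 8 * π ^ 2 * K1 ^ 2 * (d / (4 * π) * (2 * L / π) * L) := by
          field_simp; ring
      _ ≤ 8 * π ^ 2 * K1 ^ 2 * (C₀ * ε) :=
          mul_le_mul_of_nonneg_left hfinal (by positivity)
      _ = 8 * π ^ 2 * (K + 1) ^ 2 * C₀ * ε := by rw [hK1]; ring
  intro θ hθ
  calc |f θ - θ| ^ 3 ≤ d ^ 3 := pow_le_pow_left₀ (abs_nonneg _) (habs θ hθ) 3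
    _ ≤ _ := hmain

/-- Uniformly Lipschitz special case (exponent `1/3`) of the quantitative Otal lemma
for families of increasing homeomorphisms of `[0, π]`. -/
theorem otal_lemma_lipschitz
    (δ₀ K C₀ : ℝ) (hδ₀ : 0 < δ₀) (hK : 0 < K) (hC₀ : 0 < C₀)
    (Θ : ℝ → ℝ → ℝ)
    (hcont : ∀ ε ∈ Set.Ioo 0 δ₀, ContinuousOn (Θ ε) (Set.Icc 0 π))
    (hmono : ∀ ε ∈ Set.Ioo 0 δ₀, StrictMonoOn (Θ ε) (Set.Icc 0 π))
    (hbij : ∀ ε ∈ Set.Ioo 0 δ₀, Set.BijOn (Θ ε) (Set.Icc 0 π) (Set.Icc 0 π))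
    (h0 : ∀ ε ∈ Set.Ioo 0 δ₀, Θ ε 0 = 0)
    (hπ : ∀ ε ∈ Set.Ioo 0 δ₀, Θ ε π = π)
    (hsym : ∀ ε ∈ Set.Ioo 0 δ₀, ∀ θ ∈ Set.Icc 0 π, Θ ε (π - θ) = π - Θ ε θ)
    (hsuper : ∀ ε ∈ Set.Ioo 0 δ₀, ∀ θ₁ ∈ Set.Icc 0 π, ∀ θ₂ ∈ Set.Icc 0 π,
      θ₁ + θ₂ ∈ Set.Icc 0 π → Θ ε θ₁ + Θ ε θ₂ ≤ Θ ε (θ₁ + θ₂))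
    (hlip : ∀ ε ∈ Set.Ioo 0 δ₀, ∀ θ₁ ∈ Set.Icc 0 π, ∀ θ₂ ∈ Set.Icc 0 π,
      |Θ ε θ₁ - Θ ε θ₂| ≤ K * |θ₁ - θ₂|)
    (hconv : ∀ ε ∈ Set.Ioo 0 δ₀, ∀ J : ℝ → ℝ, ContinuousOn J (Set.Icc 0 π) →
      ConvexOn ℝ (Set.Icc 0 π) J → (∀ x ∈ Set.Icc 0 π, |J x| ≤ 1) →
      ∫ θ in (0 : ℝ)..π, J (Θ ε θ) * Real.sin θ ≤
        (∫ θ in (0 : ℝ)..π, J θ * Real.sin θ) + C₀ * ε) :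
    ∀ γ : ℝ, 0 < γ → γ < 1 / 3 →
      ∃ C' > 0, ∀ ε ∈ Set.Ioo 0 δ₀, ∀ θ ∈ Set.Icc 0 π,
        |Θ ε θ - θ| ≤ C' * ε ^ γ := by
  intro γ hγ0 hγ13
  have hπ0 : (0:ℝ) < π := pi_pos
  -- K is at least 1
  have hK1 : 1 ≤ K := by
    have hmem : δ₀ / 2 ∈ Ioo 0 δ₀ := ⟨by linarith, by linarith⟩
    have h1 := hlip _ hmem π ⟨hπ0.le, le_rfl⟩ 0 ⟨le_rfl, hπ0.le⟩
    rw [hπ _ hmem, h0 _ hmem, sub_zero, abs_of_pos hπ0] at h1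
    nlinarith
  have hBpos : 0 < 8 * π ^ 2 * (K + 1) ^ 2 * C₀ := by positivity
  refine ⟨(8 * π ^ 2 * (K + 1) ^ 2 * C₀) ^ ((1:ℝ)/3) * δ₀ ^ ((1:ℝ)/3 - γ), by positivity, ?_⟩
  intro ε hε θ hθ
  have hcube := otal_key K C₀ ε hK1 hC₀ hε.1 (Θ ε) (hcont ε hε) (h0 ε hε) (hπ ε hε)
    (hsym ε hε) (hsuper ε hε) (hlip ε hε) (fun J a b c => hconv ε hε J a b c) θ hθ
  have habs0 : (0:ℝ) ≤ |Θ ε θ - θ| := abs_nonneg _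
  have h1 : |Θ ε θ - θ| ≤ (8 * π ^ 2 * (K + 1) ^ 2 * C₀ * ε) ^ ((1:ℝ)/3) := by
    have h2 : |Θ ε θ - θ| = (|Θ ε θ - θ| ^ (3:ℕ)) ^ ((1:ℝ)/3) := by
      rw [← Real.rpow_natCast |Θ ε θ - θ| 3, ← Real.rpow_mul habs0]
      norm_num
    rw [h2]
    exact Real.rpow_le_rpow (by positivity) hcube (by norm_num)
  have h3 : (8 * π ^ 2 * (K + 1) ^ 2 * C₀ * ε) ^ ((1:ℝ)/3)
      = (8 * π ^ 2 * (K + 1) ^ 2 * C₀) ^ ((1:ℝ)/3) * ε ^ ((1:ℝ)/3) :=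
    Real.mul_rpow hBpos.le hε.1.le
  have h4 : ε ^ ((1:ℝ)/3) = ε ^ γ * ε ^ ((1:ℝ)/3 - γ) := by
    rw [← Real.rpow_add hε.1]
    congr 1
    ring
  have h5 : ε ^ ((1:ℝ)/3 - γ) ≤ δ₀ ^ ((1:ℝ)/3 - γ) :=
    Real.rpow_le_rpow hε.1.le hε.2.le (by linarith)
  calc |Θ ε θ - θ| ≤ (8 * π ^ 2 * (K + 1) ^ 2 * C₀ * ε) ^ ((1:ℝ)/3) := h1
    _ = (8 * π ^ 2 * (K + 1) ^ 2 * C₀) ^ ((1:ℝ)/3) * (ε ^ γ * ε ^ ((1:ℝ)/3 - γ)) := by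
        rw [h3, h4]
    _ ≤ (8 * π ^ 2 * (K + 1) ^ 2 * C₀) ^ ((1:ℝ)/3) * (ε ^ γ * δ₀ ^ ((1:ℝ)/3 - γ)) := by
        apply mul_le_mul_of_nonneg_left _ (Real.rpow_nonneg hBpos.le _)
        exact mul_le_mul_of_nonneg_left h5 (Real.rpow_nonneg hε.1.le _)
    _ = (8 * π ^ 2 * (K + 1) ^ 2 * C₀) ^ ((1:ℝ)/3) * δ₀ ^ ((1:ℝ)/3 - γ) * ε ^ γ := by
        ring
end

section
/- Let Θ : [0,π] → [0,π] be continuous with Θ(0) = 0, Θ(π) = π and Θ(π−θ) = π − Θ(θ) for all θ ∈ [0,π]. Let s > 0 and suppose that sup_{θ ∈ [0,π]} |Θ(θ) − θ| > s. Then there exist a, A ∈ (0,π) with a < A such that Θ(a) = a − s, Θ(A) = A − s, and Θ(θ) < θ − s for all θ ∈ (a, A). -/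
open Real Set

/-- Construction, via `π`-symmetry and the intermediate value theorem, of an interval
`[a, A]` on which a continuous `π`-symmetric self-map of `[0, π]` lies below
`θ ↦ θ - s`, with equality at the endpoints. -/
theorem exists_interval_below_id_sub
    (Θ : ℝ → ℝ)
    (hcont : ContinuousOn Θ (Set.Icc 0 π))
    (hmaps : Set.MapsTo Θ (Set.Icc 0 π) (Set.Icc 0 π))
    (h0 : Θ 0 = 0) (hπ : Θ π = π)
    (hsym : ∀ θ ∈ Set.Icc 0 π, Θ (π - θ) = π - Θ θ)
    (s : ℝ) (hs : 0 < s)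
    (hsup : ∃ θ ∈ Set.Icc 0 π, s < |Θ θ - θ|) :
    ∃ a ∈ Set.Ioo 0 π, ∃ A ∈ Set.Ioo 0 π, a < A ∧
      Θ a = a - s ∧ Θ A = A - s ∧ ∀ θ ∈ Set.Ioo a A, Θ θ < θ - s := by
  -- Step 1: produce θ₀ with Θ θ₀ < θ₀ - s
  obtain ⟨θ₁, hθ₁, habs⟩ := hsup
  have key : ∃ θ₀ ∈ Set.Icc 0 π, Θ θ₀ < θ₀ - s := by
    rcases lt_abs.mp habs with h | h
    · refine ⟨π - θ₁, ⟨by linarith [hθ₁.2], by linarith [hθ₁.1]⟩, ?_⟩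
      rw [hsym θ₁ hθ₁]; linarith
    · exact ⟨θ₁, hθ₁, by linarith⟩
  obtain ⟨θ₀, hθ₀, hlt⟩ := key
  set g : ℝ → ℝ := fun θ => Θ θ + s - θ with hgdef
  have hgcont : ContinuousOn g (Set.Icc 0 π) :=
    (hcont.add continuousOn_const).sub continuousOn_id
  have hg0 : g 0 = s := by simp [hgdef, h0]
  have hgπ : g π = s := by simp [hgdef, hπ]
  have hgθ₀ : g θ₀ < 0 := by simp [hgdef]; linarith
  have hθ₀0 : 0 < θ₀ := by
    rcases lt_or_eq_of_le hθ₀.1 with h | h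
    · exact h
    · exfalso; rw [← h] at hgθ₀; linarith
  have hθ₀π : θ₀ < π := by
    rcases lt_or_eq_of_le hθ₀.2 with h | h
    · exact h
    · exfalso; rw [h] at hgθ₀; linarith
  -- Left endpoint
  set S₁ : Set ℝ := Set.Icc 0 θ₀ ∩ g ⁻¹' {0} with hS₁
  have hsub₁ : Set.Icc 0 θ₀ ⊆ Set.Icc 0 π := Set.Icc_subset_Icc le_rfl hθ₀.2
  have hclosed₁ : IsClosed S₁ :=
    (hgcont.mono hsub₁).preimage_isClosed_of_isClosed isClosed_Icc isClosed_singleton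
  have hne₁ : S₁.Nonempty := by
    have := intermediate_value_Icc' hθ₀.1 (hgcont.mono hsub₁)
    have h0mem : (0 : ℝ) ∈ Set.Icc (g θ₀) (g 0) := ⟨le_of_lt hgθ₀, by rw [hg0]; linarith⟩
    obtain ⟨c, hc, hgc⟩ := this h0mem
    exact ⟨c, hc, hgc⟩
  have haS : sSup S₁ ∈ S₁ := hclosed₁.csSup_mem hne₁ ((bddAbove_Icc).mono Set.inter_subset_left)
  set a := sSup S₁ with ha
  have haIcc : a ∈ Set.Icc 0 θ₀ := haS.1
  have hga : g a = 0 := haS.2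
  have haθ₀ : a < θ₀ := lt_of_le_of_ne haIcc.2 (fun h => by rw [h] at hga; linarith)
  have ha0 : 0 < a := lt_of_le_of_ne haIcc.1 (fun h => by rw [← h] at hga; linarith)
  have hleft : ∀ θ, a < θ → θ ≤ θ₀ → g θ < 0 := by
    intro θ hθa hθθ₀
    by_contra hge
    push_neg at hge
    have hsub : Set.Icc θ θ₀ ⊆ Set.Icc 0 π :=
      Set.Icc_subset_Icc (le_trans haIcc.1 (le_of_lt hθa)) hθ₀.2
    obtain ⟨c, hc, hgc⟩ := intermediate_value_Icc' hθθ₀ (hgcont.mono hsub)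
      (⟨le_of_lt hgθ₀, hge⟩ : (0:ℝ) ∈ Set.Icc (g θ₀) (g θ))
    have hcS : c ∈ S₁ := ⟨⟨le_trans (le_trans haIcc.1 (le_of_lt hθa)) hc.1, hc.2⟩, hgc⟩
    have : c ≤ a := le_csSup ((bddAbove_Icc).mono Set.inter_subset_left) hcS
    linarith [hc.1]
  -- Right endpoint
  set S₂ : Set ℝ := Set.Icc θ₀ π ∩ g ⁻¹' {0} with hS₂
  have hsub₂ : Set.Icc θ₀ π ⊆ Set.Icc 0 π := Set.Icc_subset_Icc hθ₀.1 le_rfl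
  have hclosed₂ : IsClosed S₂ :=
    (hgcont.mono hsub₂).preimage_isClosed_of_isClosed isClosed_Icc isClosed_singleton
  have hne₂ : S₂.Nonempty := by
    have := intermediate_value_Icc hθ₀.2 (hgcont.mono hsub₂)
    have h0mem : (0 : ℝ) ∈ Set.Icc (g θ₀) (g π) := ⟨le_of_lt hgθ₀, by rw [hgπ]; linarith⟩
    obtain ⟨c, hc, hgc⟩ := this h0mem
    exact ⟨c, hc, hgc⟩
  have hAS : sInf S₂ ∈ S₂ := hclosed₂.csInf_mem hne₂ ((bddBelow_Icc).mono Set.inter_subset_left)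
  set A := sInf S₂ with hA
  have hAIcc : A ∈ Set.Icc θ₀ π := hAS.1
  have hgA : g A = 0 := hAS.2
  have hθ₀A : θ₀ < A := lt_of_le_of_ne hAIcc.1 (fun h => by rw [← h] at hgA; linarith)
  have hAπ : A < π := lt_of_le_of_ne hAIcc.2 (fun h => by rw [h] at hgA; linarith)
  have hright : ∀ θ, θ₀ ≤ θ → θ < A → g θ < 0 := by
    intro θ hθθ₀ hθA
    by_contra hge
    push_neg at hge
    have hsub : Set.Icc θ₀ θ ⊆ Set.Icc 0 π :=
      Set.Icc_subset_Icc hθ₀.1 (le_trans (le_of_lt hθA) hAIcc.2)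
    obtain ⟨c, hc, hgc⟩ := intermediate_value_Icc hθθ₀ (hgcont.mono hsub)
      (⟨le_of_lt hgθ₀, hge⟩ : (0:ℝ) ∈ Set.Icc (g θ₀) (g θ))
    have hcS : c ∈ S₂ := ⟨⟨hc.1, le_trans hc.2 (le_trans (le_of_lt hθA) hAIcc.2)⟩, hgc⟩
    have : A ≤ c := csInf_le ((bddBelow_Icc).mono Set.inter_subset_left) hcS
    linarith [hc.2]
  refine ⟨a, ⟨ha0, lt_trans haθ₀ hθ₀π⟩, A, ⟨lt_trans hθ₀0 hθ₀A, hAπ⟩,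
    lt_trans haθ₀ hθ₀A, ?_, ?_, ?_⟩
  · have : Θ a + s - a = 0 := hga
    linarith
  · have : Θ A + s - A = 0 := hgA
    linarith
  · intro θ hθ
    rcases le_or_gt θ θ₀ with h | h
    · have := hleft θ hθ.1 h
      simp only [hgdef] at this; linarith
    · have := hright θ (le_of_lt h) hθ.2
      simp only [hgdef] at this; linarith
end

section
/- Let Θ : [0,π] → ℝ be superadditive, i.e. Θ(θ₁) + Θ(θ₂) ≤ Θ(θ₁+θ₂) for all θ₁, θ₂ ≥ 0 with θ₁+θ₂ ≤ π. Suppose c ∈ [0,π] satisfies Θ(c) = c, and that m ≥ 0 and b, B are real numbers with c ≤ b < B ≤ π such that Θ(θ) < θ − m for all θ ∈ (b, B). Then Θ(h) < h − m for all h ∈ (b − c, B − c). -/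
open Real Set

/-- Translation lemma for superadditive functions on `[0, π]`: using a fixed point `c`
of `Θ`, the interval on which `Θ` lies below the identity minus `m` can be shifted
by `c`. -/
theorem superadditive_translation
    (Θ : ℝ → ℝ)
    (hsuper : ∀ θ₁ θ₂ : ℝ, 0 ≤ θ₁ → 0 ≤ θ₂ → θ₁ + θ₂ ≤ π → Θ θ₁ + Θ θ₂ ≤ Θ (θ₁ + θ₂))
    (c : ℝ) (hc : c ∈ Set.Icc 0 π) (hΘc : Θ c = c)
    (m : ℝ) (hm : 0 ≤ m)
    (b B : ℝ) (hcb : c ≤ b) (hbB : b < B) (hBπ : B ≤ π)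
    (hlt : ∀ θ ∈ Set.Ioo b B, Θ θ < θ - m) :
    ∀ h ∈ Set.Ioo (b - c) (B - c), Θ h < h - m := by
  rintro h ⟨h1, h2⟩
  have hh0 : 0 ≤ h := le_trans (by linarith [hc.1]) h1.le
  have hsum : Θ h + Θ c ≤ Θ (h + c) :=
    hsuper h c hh0 hc.1 (by linarith)
  have hmem : h + c ∈ Set.Ioo b B := ⟨by linarith, by linarith⟩
  have := hlt (h + c) hmem
  linarith [hΘc ▸ hsum]
end

section
/- Let Θ : [0,π] → ℝ be continuous with Θ(θ) ≥ 0 for all θ ∈ [0,π]. Let L ∈ (0,π], m ≥ 0, E ∈ ℝ, and let 0 ≤ l₁ ≤ l₂ ≤ L. Assume Θ(θ) ≤ θ for all θ ∈ [0,L], Θ(θ) ≤ θ − m for all θ ∈ [l₁, l₂], and ∫₀^π max(L − Θ(θ), 0)·sin θ dθ ≤ ∫₀^π max(L − θ, 0)·sin θ dθ + E. Then m·(cos l₁ − cos l₂) ≤ E. -/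
open Real Set MeasureTheory

/-! Testing against `J(x) = max (L - x) 0`: since `Θ ≤ id` on `[0, L]` and `J` vanishes beyond `L`,
the integrand `(J ∘ Θ - J) · sin` is nonnegative on `[0, π]`, and on `[l₁, l₂]` it is at least
`m · sin`, whose integral is `m (cos l₁ - cos l₂)`. -/

theorem intervalIntegral.integral_le_integral_of_nonneg_of_le_on_subinterval
    {f g : ℝ → ℝ} {a b c d : ℝ} (hac : a ≤ c) (hcd : c ≤ d) (hdb : d ≤ b)
    (hf : IntervalIntegrable f volume a b) (hg : IntervalIntegrable g volume c d)
    (hf_nonneg : ∀ x ∈ Icc a b, 0 ≤ f x) (hgf : ∀ x ∈ Icc c d, g x ≤ f x) :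
    ∫ x in c..d, g x ≤ ∫ x in a..b, f x := by
  have hf_cd : IntervalIntegrable f volume c d :=
    hf.mono_set <| uIcc_subset_uIcc (Icc_subset_uIcc ⟨hac, hcd.trans hdb⟩)
      (Icc_subset_uIcc ⟨hac.trans hcd, hdb⟩)
  calc ∫ x in c..d, g x ≤ ∫ x in c..d, f x := integral_mono_on hcd hg hf_cd hgf
    _ ≤ ∫ x in a..b, f x :=
      integral_mono_interval hac hcd hdb
        ((ae_restrict_iff' measurableSet_Ioc).2 <|
          Filter.Eventually.of_forall fun x hx => hf_nonneg x (Ioc_subset_Icc_self hx)) hf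

theorem max_sub_zero_le_max_sub_zero {L x y : ℝ} (h : x ≤ L → y ≤ x) :
    max (L - x) 0 ≤ max (L - y) 0 := by
  rcases le_or_gt x L with hxL | hLx
  · exact max_le_max (sub_le_sub_left (h hxL) L) le_rfl
  · rw [max_eq_right (by linarith)]
    exact le_max_right _ _

theorem le_max_sub_zero_sub_max_sub_zero {L x y m : ℝ} (hx : x ≤ L) (hy : y ≤ x - m) :
    m ≤ max (L - y) 0 - max (L - x) 0 := by
  rw [max_eq_left (sub_nonneg.2 hx)]
  linarith [le_max_left (L - y) 0]

theorem otal_integral_estimate_general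
    (Θ : ℝ → ℝ)
    (hcont : ContinuousOn Θ (Set.Icc 0 π))
    (L m E l₁ l₂ : ℝ)
    (hL : L ∈ Set.Ioc 0 π)
    (hl₁ : 0 ≤ l₁) (hl₁₂ : l₁ ≤ l₂) (hl₂ : l₂ ≤ L)
    (hle : ∀ θ ∈ Set.Icc 0 L, Θ θ ≤ θ)
    (hlt : ∀ θ ∈ Set.Icc l₁ l₂, Θ θ ≤ θ - m)
    (hint : ∫ θ in (0 : ℝ)..π, max (L - Θ θ) 0 * Real.sin θ ≤
      (∫ θ in (0 : ℝ)..π, max (L - θ) 0 * Real.sin θ) + E) :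
    m * (Real.cos l₁ - Real.cos l₂) ≤ E := by
  have hl₂π : l₂ ≤ π := hl₂.trans hL.2
  have hJΘ : IntervalIntegrable (fun θ => max (L - Θ θ) 0 * sin θ) volume 0 π :=
    (((continuousOn_const.sub hcont).sup continuousOn_const).mul
      continuous_sin.continuousOn).intervalIntegrable_of_Icc pi_pos.le
  have hJ : IntervalIntegrable (fun θ => max (L - θ) 0 * sin θ) volume 0 π :=
    (((continuous_const.sub continuous_id).max continuous_const).mul
      continuous_sin).intervalIntegrable 0 π
  have hgap_nonneg : ∀ θ ∈ Icc 0 π, 0 ≤ max (L - Θ θ) 0 * sin θ - max (L - θ) 0 * sin θ :=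
    fun θ hθ => sub_nonneg.2 <| mul_le_mul_of_nonneg_right
      (max_sub_zero_le_max_sub_zero fun hθL => hle θ ⟨hθ.1, hθL⟩)
      (sin_nonneg_of_nonneg_of_le_pi hθ.1 hθ.2)
  have hgap_ge : ∀ θ ∈ Icc l₁ l₂, m * sin θ ≤ max (L - Θ θ) 0 * sin θ - max (L - θ) 0 * sin θ :=
    fun θ hθ => by
      rw [← sub_mul]
      exact mul_le_mul_of_nonneg_right
        (le_max_sub_zero_sub_max_sub_zero (hθ.2.trans hl₂) (hlt θ hθ))
        (sin_nonneg_of_nonneg_of_le_pi (hl₁.trans hθ.1) (hθ.2.trans hl₂π))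
  calc m * (cos l₁ - cos l₂) = ∫ θ in l₁..l₂, m * sin θ := by
        rw [intervalIntegral.integral_const_mul, integral_sin]
    _ ≤ ∫ θ in (0 : ℝ)..π, (max (L - Θ θ) 0 * sin θ - max (L - θ) 0 * sin θ) :=
      intervalIntegral.integral_le_integral_of_nonneg_of_le_on_subinterval hl₁ hl₁₂ hl₂π
        (hJΘ.sub hJ) ((continuous_const.mul continuous_sin).intervalIntegrable _ _)
        hgap_nonneg hgap_ge
    _ = (∫ θ in (0 : ℝ)..π, max (L - Θ θ) 0 * sin θ) - ∫ θ in (0 : ℝ)..π, max (L - θ) 0 * sin θ :=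
      intervalIntegral.integral_sub hJΘ hJ
    _ ≤ E := by linarith

/-- Key integral estimate in the proof of the quantitative Otal lemma, obtained by
testing the convexity inequality against the convex function `x ↦ max (L - x) 0`. -/
theorem otal_integral_estimate
    (Θ : ℝ → ℝ)
    (hcont : ContinuousOn Θ (Set.Icc 0 π))
    (hnonneg : ∀ θ ∈ Set.Icc 0 π, 0 ≤ Θ θ)
    (L m E l₁ l₂ : ℝ)
    (hL : L ∈ Set.Ioc 0 π) (hm : 0 ≤ m)
    (hl₁ : 0 ≤ l₁) (hl₁₂ : l₁ ≤ l₂) (hl₂ : l₂ ≤ L)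
    (hle : ∀ θ ∈ Set.Icc 0 L, Θ θ ≤ θ)
    (hlt : ∀ θ ∈ Set.Icc l₁ l₂, Θ θ ≤ θ - m)
    (hint : ∫ θ in (0 : ℝ)..π, max (L - Θ θ) 0 * Real.sin θ ≤
      (∫ θ in (0 : ℝ)..π, max (L - θ) 0 * Real.sin θ) + E) :
    m * (Real.cos l₁ - Real.cos l₂) ≤ E :=
  otal_integral_estimate_general Θ hcont L m E l₁ l₂ hL hl₁ hl₁₂ hl₂ hle hlt hint
end

section
/- Let θ ∈ ℝ and c ∈ ℂ with |c| < 1, and define γ : ℂ → ℂ by γ(z) = e^{iθ}·(z + c)/(conj(c)·z + 1). Then for all ξ, ζ ∈ ℂ with |ξ| = 1, |ζ| = 1 and ξ ≠ ζ, one has 2·log|γ(ξ) − γ(ζ)| = 2·log|ξ − ζ| + log( |deriv γ (ξ)| · |deriv γ (ζ)| ). Equivalently, setting L(x, y) := 2·log|x − y| for distinct points x, y of the unit circle, the Möbius automorphism γ of the unit disk satisfies L(γ(ξ), γ(ζ)) = L(ξ, ζ) + log(|γ'(ξ)|·|γ'(ζ)|). -/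
/-!
Every Möbius map `m z = (a z + b)/(c z + d)` satisfies Cayley's identity
`(m z - m w)² = (z - w)² · m'(z) · m'(w)`, since both sides equal
`(ad - bc)² (z - w)² / ((cz + d)(cw + d))²`. Taking norms and logarithms gives the
transformation rule of `2 log |z - w|`; the disk automorphism `γ` is such a map with
`ad - bc = e^{iθ}(1 - |c|²) ≠ 0`, and its pole `-1/c̄` lies outside the closed disk.
-/

noncomputable def mobius (a b c d : ℂ) (z : ℂ) : ℂ := (a * z + b) / (c * z + d)

section Mobius

variable {a b c d : ℂ}

theorem mobius_sub_mobius {z w : ℂ} (hz : c * z + d ≠ 0) (hw : c * w + d ≠ 0) :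
    mobius a b c d z - mobius a b c d w =
      (a * d - b * c) * (z - w) / ((c * z + d) * (c * w + d)) := by
  rw [mobius, mobius, div_sub_div _ _ hz hw]
  congr 1
  ring

theorem hasDerivAt_mobius {z : ℂ} (hz : c * z + d ≠ 0) :
    HasDerivAt (mobius a b c d) ((a * d - b * c) / (c * z + d) ^ 2) z := by
  have hnum : HasDerivAt (fun z => a * z + b) a z := by
    simpa using ((hasDerivAt_id z).const_mul a).add_const b
  have hden : HasDerivAt (fun z => c * z + d) c z := by
    simpa using ((hasDerivAt_id z).const_mul c).add_const d
  exact (hnum.div hden hz).congr_deriv (by ring)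

theorem mobius_sub_mobius_sq {z w : ℂ} (hz : c * z + d ≠ 0) (hw : c * w + d ≠ 0) :
    (mobius a b c d z - mobius a b c d w) ^ 2 =
      (z - w) ^ 2 * (deriv (mobius a b c d) z * deriv (mobius a b c d) w) := by
  rw [mobius_sub_mobius hz hw, (hasDerivAt_mobius hz).deriv, (hasDerivAt_mobius hw).deriv]
  field_simp

theorem two_mul_log_norm_mobius_sub (hdet : a * d - b * c ≠ 0) {z w : ℂ}
    (hz : c * z + d ≠ 0) (hw : c * w + d ≠ 0) (hzw : z ≠ w) :
    2 * Real.log ‖mobius a b c d z - mobius a b c d w‖ =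
      2 * Real.log ‖z - w‖ +
        Real.log (‖deriv (mobius a b c d) z‖ * ‖deriv (mobius a b c d) w‖) := by
  have hderiv : ∀ {u}, c * u + d ≠ 0 → ‖deriv (mobius a b c d) u‖ ≠ 0 := fun hu => by
    rw [(hasDerivAt_mobius hu).deriv]
    simp [hdet, hu]
  have hnorm := congrArg norm (mobius_sub_mobius_sq (a := a) (b := b) hz hw)
  simp only [norm_pow, norm_mul] at hnorm
  have two_mul_log : ∀ x : ℝ, 2 * Real.log x = Real.log (x ^ 2) := fun x => by
    simp [Real.log_pow]
  rw [two_mul_log, two_mul_log, hnorm, Real.log_mul (by simp [sub_ne_zero.mpr hzw])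
    (mul_ne_zero (hderiv hz) (hderiv hw))]

end Mobius

theorem conj_mul_add_one_ne_zero {c z : ℂ} (hc : ‖c‖ < 1) (hz : ‖z‖ ≤ 1) :
    (starRingEnd ℂ) c * z + 1 ≠ 0 := by
  intro h
  have hnorm : ‖(starRingEnd ℂ) c * z‖ = 1 := by
    rw [eq_neg_of_add_eq_zero_left h, norm_neg, norm_one]
  rw [norm_mul, Complex.norm_conj] at hnorm
  nlinarith [norm_nonneg c, norm_nonneg z]

theorem one_sub_conj_mul_self_ne_zero {c : ℂ} (hc : ‖c‖ < 1) :
    1 - (starRingEnd ℂ) c * c ≠ 0 := by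
  rw [sub_ne_zero, Complex.conj_mul', ne_comm]
  exact_mod_cast (pow_lt_one₀ (norm_nonneg c) hc two_ne_zero).ne

/-- Transformation of the renormalized length `L(x,y) = 2 log |x - y|` of geodesics of
the Poincaré disk under the Möbius automorphism `γ(z) = e^{iθ}(z+c)/(c̄ z + 1)`:
`L(γξ, γζ) = L(ξ, ζ) + log (|γ'(ξ)| |γ'(ζ)|)` for distinct points `ξ, ζ` of the
unit circle. -/
theorem renormalized_length_mobius
    (θ : ℝ) (c : ℂ) (hc : ‖c‖ < 1)
    (γ : ℂ → ℂ)
    (hγ : ∀ z : ℂ, γ z = Complex.exp (θ * Complex.I) * (z + c) /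
      ((starRingEnd ℂ) c * z + 1)) :
    ∀ ξ ζ : ℂ, ‖ξ‖ = 1 → ‖ζ‖ = 1 → ξ ≠ ζ →
      2 * Real.log ‖γ ξ - γ ζ‖ =
        2 * Real.log ‖ξ - ζ‖ +
          Real.log (‖deriv γ ξ‖ * ‖deriv γ ζ‖) := by
  intro ξ ζ hξ hζ hne
  set u := Complex.exp (θ * Complex.I)
  have hγ_mobius : γ = mobius u (u * c) ((starRingEnd ℂ) c) 1 := by
    funext z
    rw [hγ, mobius, mul_add]
  have hdet : u * 1 - u * c * (starRingEnd ℂ) c ≠ 0 := by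
    have : u * 1 - u * c * (starRingEnd ℂ) c = u * (1 - (starRingEnd ℂ) c * c) := by ring
    rw [this]
    exact mul_ne_zero (Complex.exp_ne_zero _) (one_sub_conj_mul_self_ne_zero hc)
  rw [hγ_mobius]
  exact two_mul_log_norm_mobius_sub hdet (conj_mul_add_one_ne_zero hc hξ.le)
    (conj_mul_add_one_ne_zero hc hζ.le) hne
end

section
/- Let q : ℝ → ℝ be continuous with q(t) ≥ 0 for all t ≥ 0, and let j, z : ℝ → ℝ be twice differentiable functions satisfying j(0) = z(0) = 0, j'(0) = z'(0) = 1, j''(t) ≤ q(t)·j(t) for all t ≥ 0, z''(t) = q(t)·z(t) for all t ≥ 0, and j(t) > 0 for all t > 0. Then j(t) ≤ z(t) for all t ≥ 0. -/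
/-!
The comparison solution `z` stays positive on `(0, ∞)`: wherever it is positive it is convex, so
having left `0` with slope `1` it cannot come back to `0`. Hence the Wronskian `W = j' z - j z'`,
which vanishes at `0` and satisfies `W' = j'' z - j z'' = (j'' - q j) z ≤ 0`, is nonpositive on
`[0, ∞)`. Since `(j / z)' = W / z²`, the ratio `j / z` is antitone on `(0, ∞)`; its limit at `0⁺`
is `j'(0) / z'(0) = 1`, so `j / z ≤ 1`.
-/

open Set Filter Topology

theorem eventually_pos_nhdsGT_of_deriv_pos {f : ℝ → ℝ} {a : ℝ} (ha : f a = 0)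
    (hf : 0 < deriv f a) : ∀ᶠ t in 𝓝[>] a, 0 < f t := by
  filter_upwards [nhdsWithin_le_nhds (eventually_nhdsWithin_sign_eq_of_deriv_pos hf ha),
    self_mem_nhdsWithin] with t hsign (ht : a < t)
  rwa [sign_pos (sub_pos.mpr ht), sign_eq_one_iff] at hsign

theorem exists_first_nonpos {f : ℝ → ℝ} {a b : ℝ} (hf : Continuous f)
    (hpos : ∀ᶠ t in 𝓝[>] a, 0 < f t) (hab : a < b) (hb : f b ≤ 0) :
    ∃ c, a < c ∧ f c ≤ 0 ∧ ∀ t ∈ Ioo a c, 0 < f t := by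
  set S := {t | a < t ∧ f t ≤ 0}
  have hS : S.Nonempty := ⟨b, hab, hb⟩
  have hSbdd : BddBelow S := ⟨a, fun t ht => ht.1.le⟩
  obtain ⟨δ, hδ, hδpos⟩ := mem_nhdsGT_iff_exists_Ioo_subset.mp hpos
  have hδc : δ ≤ sInf S := le_csInf hS fun t ⟨hat, hft⟩ =>
    not_lt.mp fun htδ => (hδpos ⟨hat, htδ⟩ : 0 < f t).not_ge hft
  refine ⟨sInf S, hδ.trans_le hδc, ?_, fun t ⟨hat, htc⟩ => ?_⟩
  · exact closure_minimal (fun t ht => ht.2) (isClosed_le hf continuous_const)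
      (csInf_mem_closure hS hSbdd)
  · exact not_le.mp fun hft => (csInf_le hSbdd ⟨hat, hft⟩).not_gt htc

theorem pos_of_deriv_deriv_nonneg {f : ℝ → ℝ} {a : ℝ} (hf : Differentiable ℝ f)
    (hf' : Differentiable ℝ (deriv f)) (ha : f a = 0) (hda : 0 < deriv f a)
    (hconv : ∀ t, a < t → 0 < f t → 0 ≤ deriv (deriv f) t) : ∀ t, a < t → 0 < f t := by
  by_contra! ⟨b, hab, hb⟩
  obtain ⟨c, hac, hc, hpos⟩ :=
    exists_first_nonpos hf.continuous (eventually_pos_nhdsGT_of_deriv_pos ha hda) hab hb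
  have hmono : MonotoneOn (deriv f) (Icc a c) :=
    monotoneOn_of_deriv_nonneg (convex_Icc a c) hf'.continuous.continuousOn
      hf'.differentiableOn fun t ht => by
        rw [interior_Icc] at ht
        exact hconv t ht.1 (hpos t ht)
  have hstrict : StrictMonoOn f (Icc a c) :=
    strictMonoOn_of_deriv_pos (convex_Icc a c) hf.continuous.continuousOn fun t ht => by
      rw [interior_Icc] at ht
      exact hda.trans_le (hmono (left_mem_Icc.mpr hac.le) (Ioo_subset_Icc_self ht) ht.1.le)
  have := hstrict (left_mem_Icc.mpr hac.le) (right_mem_Icc.mpr hac.le) hac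
  linarith

theorem tendsto_div_nhdsNE_of_hasDerivAt {f g : ℝ → ℝ} {f' g' a : ℝ} (hf : HasDerivAt f f' a)
    (hg : HasDerivAt g g' a) (hfa : f a = 0) (hga : g a = 0) (hg' : g' ≠ 0) :
    Tendsto (fun t => f t / g t) (𝓝[≠] a) (𝓝 (f' / g')) := by
  refine ((hasDerivAt_iff_tendsto_slope.mp hf).div (hasDerivAt_iff_tendsto_slope.mp hg)
    hg').congr' ?_
  filter_upwards [self_mem_nhdsWithin] with t (ht : t ≠ a)
  rw [Pi.div_apply, slope_def_field, slope_def_field, hfa, hga, sub_zero, sub_zero]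
  exact div_div_div_cancel_right₀ (sub_ne_zero.mpr ht) _ _

noncomputable def wronskian (f g : ℝ → ℝ) (t : ℝ) : ℝ := deriv f t * g t - f t * deriv g t

theorem hasDerivAt_wronskian {f g : ℝ → ℝ} {t : ℝ} (hf : DifferentiableAt ℝ f t)
    (hf' : DifferentiableAt ℝ (deriv f) t) (hg : DifferentiableAt ℝ g t)
    (hg' : DifferentiableAt ℝ (deriv g) t) :
    HasDerivAt (wronskian f g) (deriv (deriv f) t * g t - f t * deriv (deriv g) t) t :=
  ((hf'.hasDerivAt.mul hg.hasDerivAt).sub (hf.hasDerivAt.mul hg'.hasDerivAt)).congr_deriv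
    (by ring)

theorem wronskian_nonpos {q f g : ℝ → ℝ} {a : ℝ} (hf : Differentiable ℝ f)
    (hf' : Differentiable ℝ (deriv f)) (hg : Differentiable ℝ g)
    (hg' : Differentiable ℝ (deriv g)) (hfa : f a = 0) (hga : g a = 0)
    (hf'' : ∀ t, a < t → deriv (deriv f) t ≤ q t * f t)
    (hg'' : ∀ t, a < t → deriv (deriv g) t = q t * g t) (hg0 : ∀ t, a < t → 0 ≤ g t) :
    ∀ t, a ≤ t → wronskian f g t ≤ 0 := by
  have hW t := hasDerivAt_wronskian (hf t) (hf' t) (hg t) (hg' t)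
  have hanti : AntitoneOn (wronskian f g) (Ici a) :=
    antitoneOn_of_hasDerivWithinAt_nonpos (convex_Ici a)
      (fun t _ => (hW t).continuousAt.continuousWithinAt) (fun t _ => (hW t).hasDerivWithinAt)
      fun t ht => by
        rw [interior_Ici] at ht
        rw [hg'' t ht]
        linarith [mul_le_mul_of_nonneg_right (hf'' t ht) (hg0 t ht)]
  intro t ht
  simpa [wronskian, hfa, hga] using hanti self_mem_Ici ht ht

theorem antitoneOn_div_of_wronskian_nonpos {f g : ℝ → ℝ} {a : ℝ} (hf : Differentiable ℝ f)
    (hg : Differentiable ℝ g) (hg0 : ∀ t, a < t → g t ≠ 0)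
    (hW : ∀ t, a < t → wronskian f g t ≤ 0) :
    AntitoneOn (fun t => f t / g t) (Ioi a) := by
  have hdiv t (ht : a < t) := (hf t).hasDerivAt.div (hg t).hasDerivAt (hg0 t ht)
  refine antitoneOn_of_hasDerivWithinAt_nonpos (convex_Ioi a)
    (fun t ht => (hdiv t ht).continuousAt.continuousWithinAt)
    (fun t ht => (hdiv t (interior_subset ht)).hasDerivWithinAt) fun t ht => ?_
  rw [interior_Ioi] at ht
  exact div_nonpos_of_nonpos_of_nonneg (hW t ht) (sq_nonneg _)

theorem AntitoneOn.le_of_tendsto_nhdsGT {f : ℝ → ℝ} {a l t : ℝ} (hf : AntitoneOn f (Ioi a))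
    (hlim : Tendsto f (𝓝[>] a) (𝓝 l)) (ht : a < t) : f t ≤ l :=
  ge_of_tendsto hlim <| by
    filter_upwards [Ioo_mem_nhdsGT ht] with s hs using hf hs.1 ht hs.2.le

theorem sturm_comparison_general
    (q j z : ℝ → ℝ)
    (hq0 : ∀ t : ℝ, 0 ≤ t → 0 ≤ q t)
    (hj : Differentiable ℝ j) (hj' : Differentiable ℝ (deriv j))
    (hz : Differentiable ℝ z) (hz' : Differentiable ℝ (deriv z))
    (hj0 : j 0 = 0) (hz0 : z 0 = 0)
    (hdj0 : deriv j 0 = 1) (hdz0 : deriv z 0 = 1)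
    (hjineq : ∀ t : ℝ, 0 ≤ t → deriv (deriv j) t ≤ q t * j t)
    (hzeq : ∀ t : ℝ, 0 ≤ t → deriv (deriv z) t = q t * z t) :
    ∀ t : ℝ, 0 ≤ t → j t ≤ z t := by
  have hzpos : ∀ t, 0 < t → 0 < z t :=
    pos_of_deriv_deriv_nonneg hz hz' hz0 (by simp [hdz0]) fun t ht hzt => by
      rw [hzeq t ht.le]
      exact mul_nonneg (hq0 t ht.le) hzt.le
  have hW := wronskian_nonpos hj hj' hz hz' hj0 hz0 (fun t ht => hjineq t ht.le)
    (fun t ht => hzeq t ht.le) fun t ht => (hzpos t ht).le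
  have hanti := antitoneOn_div_of_wronskian_nonpos hj hz (fun t ht => (hzpos t ht).ne')
    fun t ht => hW t ht.le
  have hlim : Tendsto (fun t => j t / z t) (𝓝[>] 0) (𝓝 1) := by
    simpa [hdj0, hdz0] using (tendsto_div_nhdsNE_of_hasDerivAt (hj 0).hasDerivAt
      (hz 0).hasDerivAt hj0 hz0 (by simp [hdz0])).mono_left (nhdsGT_le_nhdsNE 0)
  intro t ht
  rcases ht.eq_or_lt with rfl | ht
  · rw [hj0, hz0]
  exact (div_le_one (hzpos t ht)).mp (hanti.le_of_tendsto_nhdsGT hlim ht)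

/-- Sturm-type comparison: a positive solution of the differential inequality
`j'' ≤ q·j` is dominated by the solution of the comparison equation `z'' = q·z`
with the same initial data `j(0) = z(0) = 0`, `j'(0) = z'(0) = 1`. -/
theorem sturm_comparison
    (q j z : ℝ → ℝ)
    (hq : Continuous q) (hq0 : ∀ t : ℝ, 0 ≤ t → 0 ≤ q t)
    (hj : Differentiable ℝ j) (hj' : Differentiable ℝ (deriv j))
    (hz : Differentiable ℝ z) (hz' : Differentiable ℝ (deriv z))
    (hj0 : j 0 = 0) (hz0 : z 0 = 0)
    (hdj0 : deriv j 0 = 1) (hdz0 : deriv z 0 = 1)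
    (hjineq : ∀ t : ℝ, 0 ≤ t → deriv (deriv j) t ≤ q t * j t)
    (hzeq : ∀ t : ℝ, 0 ≤ t → deriv (deriv z) t = q t * z t)
    (hjpos : ∀ t : ℝ, 0 < t → 0 < j t) :
    ∀ t : ℝ, 0 ≤ t → j t ≤ z t :=
  sturm_comparison_general q j z hq0 hj hj' hz hz' hj0 hz0 hdj0 hdz0 hjineq hzeq
end
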